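/- arXiv:2310.16022 — 2 statements merged into one kernel-verified Lean document; each statement's English description precedes it below -/
import Mathlib

section
/- Natural colors of finite words are invariant under the right congruence of the leading word: if u ∼_L u′ then for all nonempty finite words v, the natural color of v with respect to u equals the natural color of v with respect to u′. -/
open scoped Classical

/-- Concatenation of a finite word with an infinite word. -/
def wcat {A : Type} (u : List A) (w : ℕ → A) : ℕ → A :=
  fun n => if h : n < u.length then u.get ⟨n, h⟩ else w (n - u.length)

/-- The infinite periodic word `v^ω`. -/
def wpow {A : Type} [Inhabited A] (v : List A) : ℕ → A :=
  fun n => v.getD (n % v.length) default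

/-- The ultimately periodic word `u · v^ω`. -/
def upw {A : Type} [Inhabited A] (u v : List A) : ℕ → A := wcat u (wpow v)

/-- The finite word `v^i`. -/
def wrep {A : Type} (v : List A) (i : ℕ) : List A := (List.replicate i v).flatten

/-- The right congruence `x ∼_L y`. -/
def simL {A : Type} (L : Set (ℕ → A)) (x y : List A) : Prop :=
  ∀ w : ℕ → A, wcat x w ∈ L ↔ wcat y w ∈ L

/-- `w` is `u`-invariant: `u ∼_L u·w`. -/
def UInv {A : Type} (L : Set (ℕ → A)) (u w : List A) : Prop := simL L u (u ++ w)

/-- `v` is relevant to `u`. -/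
def URel {A : Type} (L : Set (ℕ → A)) (u v : List A) : Prop :=
  ∃ z : List A, UInv L u (v ++ z)

/-- `v` has natural color at most `c` wrt `u`. -/
def ColorAtMost {A : Type} [Inhabited A] (L : Set (ℕ → A)) (u : List A) :
    ℕ → List A → Prop
  | c, v => ∀ z : List A, UInv L u (v ++ z) →
      ((upw u (v ++ z) ∈ L ↔ Even c) ∨
        ∃ i : ℕ, 0 < i ∧ ∃ c' : Fin c, ColorAtMost L u c' (wrep (v ++ z) i))
  termination_by c => c
  decreasing_by exact c'.isLt

/-- The natural color of the finite word `v` wrt `u`: `⊥` (i.e. `-∞`) if `v` is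
irrelevant to `u`, and otherwise the minimal `c ≥ 0` as in the paper. -/
noncomputable def ncol {A : Type} [Inhabited A] (L : Set (ℕ → A)) (u v : List A) :
    WithBot ℕ :=
  if URel L u v then ((sInf {c : ℕ | ColorAtMost L u c v} : ℕ) : WithBot ℕ) else ⊥

/-- `v` is stable wrt `u`. -/
def Stable {A : Type} [Inhabited A] (L : Set (ℕ → A)) (u v : List A) : Prop :=
  ∀ i : ℕ, 0 < i → ncol L u v = ncol L u (wrep v i)

/-- `v` is `u`-reliable. -/
def UReliable {A : Type} [Inhabited A] (L : Set (ℕ → A)) (u v : List A) : Prop :=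
  UInv L u v ∧ Stable L u v

/-- The natural color of an ultimately periodic infinite word. -/
noncomputable def icol {A : Type} [Inhabited A] (L : Set (ℕ → A)) (w : ℕ → A) : ℕ :=
  sInf {c : ℕ | ∃ u v : List A, v ≠ [] ∧ w = upw u v ∧ UInv L u v ∧
    ncol L u v = (c : WithBot ℕ)}

/-- The set of states visited infinitely often by a run. -/
def infSet {Q : Type} (r : ℕ → Q) : Set Q := {q | ∀ n : ℕ, ∃ m : ℕ, n ≤ m ∧ r m = q}

/-- The run of a complete deterministic automaton on an infinite word. -/
def runOf {A Q : Type} (δ : Q → A → Q) (q0 : Q) (w : ℕ → A) : ℕ → Q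
  | 0 => q0
  | n + 1 => δ (runOf δ q0 w n) (w n)

/-- `L` is ω-regular: recognized by some deterministic Muller automaton. -/
def OmegaRegular {A : Type} (L : Set (ℕ → A)) : Prop :=
  ∃ (Q : Type) (_ : Fintype Q) (q0 : Q) (δ : Q → A → Q) (α : Set (Set Q)),
    ∀ w : ℕ → A, w ∈ L ↔ infSet (runOf δ q0 w) ∈ α

/-! Since `∼_L` is a right congruence, `u`-invariance, relevance to `u` and membership of
`u·(vz)^ω` in `L` do not change when `u` is replaced by an equivalent `u'`; the colour bounds
`ColorAtMost` then agree by strong induction on the colour. -/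

theorem wcat_append {A : Type} (u w : List A) (z : ℕ → A) :
    wcat (u ++ w) z = wcat u (wcat w z) := by
  funext n
  simp only [wcat, List.length_append, List.get_eq_getElem, List.getElem_append]
  split_ifs <;> first | rfl | omega | (congr 1; omega)

theorem simL.symm {A : Type} {L : Set (ℕ → A)} {x y : List A} (h : simL L x y) :
    simL L y x :=
  fun w => (h w).symm

theorem simL.trans {A : Type} {L : Set (ℕ → A)} {x y z : List A} (hxy : simL L x y)
    (hyz : simL L y z) : simL L x z :=
  fun w => (hxy w).trans (hyz w)

theorem simL.append_right {A : Type} {L : Set (ℕ → A)} {x y : List A} (h : simL L x y)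
    (v : List A) : simL L (x ++ v) (y ++ v) := by
  intro w
  rw [wcat_append, wcat_append]
  exact h (wcat v w)

theorem uInv_iff_of_simL {A : Type} {L : Set (ℕ → A)} {u u' : List A} (h : simL L u u')
    (w : List A) : UInv L u w ↔ UInv L u' w :=
  ⟨fun hw => h.symm.trans (hw.trans (h.append_right w)),
    fun hw => h.trans (hw.trans (h.append_right w).symm)⟩

theorem uRel_iff_of_simL {A : Type} {L : Set (ℕ → A)} {u u' : List A} (h : simL L u u')
    (v : List A) : URel L u v ↔ URel L u' v := by
  simp only [URel, uInv_iff_of_simL h]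

theorem upw_mem_iff_of_simL {A : Type} [Inhabited A] {L : Set (ℕ → A)} {u u' : List A}
    (h : simL L u u') (v : List A) : upw u v ∈ L ↔ upw u' v ∈ L :=
  h (wpow v)

theorem colorAtMost_iff_of_simL {A : Type} [Inhabited A] {L : Set (ℕ → A)} {u u' : List A}
    (h : simL L u u') (c : ℕ) (v : List A) : ColorAtMost L u c v ↔ ColorAtMost L u' c v := by
  induction c using Nat.strong_induction_on generalizing v with
  | _ c ih =>
    rw [ColorAtMost, ColorAtMost]
    simp only [uInv_iff_of_simL h, upw_mem_iff_of_simL h, ih _ (Fin.isLt _)]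

theorem ncol_eq_of_simL {A : Type} [Inhabited A] {L : Set (ℕ → A)} {u u' : List A}
    (h : simL L u u') (v : List A) : ncol L u v = ncol L u' v := by
  simp only [ncol, uRel_iff_of_simL h, colorAtMost_iff_of_simL h]

theorem color_invariant_under_simL_general {A : Type} [Inhabited A] (L : Set (ℕ → A))
    (u u' : List A) (h : simL L u u') :
    ∀ v : List A, v ≠ [] → ncol L u v = ncol L u' v :=
  fun v _ => ncol_eq_of_simL h v

/-- natural colors of finite words are invariant under the right
congruence of the leading word. -/
theorem color_invariant_under_simL {A : Type} [Inhabited A] (L : Set (ℕ → A))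
    (hreg : OmegaRegular L) (u u' : List A) (h : simL L u u') :
    ∀ v : List A, v ≠ [] → ncol L u v = ncol L u' v :=
  color_invariant_under_simL_general L u u' h
end

section
/- Natural colors of finite words are monotonically non-increasing under extension: if the natural color of v with respect to u is c, then for every finite word z, the natural color of vz with respect to u is at most c. -/
open scoped Classical

/-!
Extending `v` only shrinks the family of extensions quantified over in `ColorAtMost`, so
`ColorAtMost c v` implies `ColorAtMost c (v ++ z)`. The danger is a relevant `v` with no color at
all, where `ncol` takes the junk value `sInf ∅ = 0`; for ω-regular `L` this cannot happen.

Fix a deterministic Muller automaton and let the profile of a word record, from every state, the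
state reached and the set of states visited. Through an idempotent power of `x`, whether
`u x^ω ∈ L` depends only on the profile of `x`, hence so does `ColorAtMost c x`; as there are
finitely many profiles, the colors of colorable words are bounded by some `B`. If an invariant
word `w` had no color, unfolding `¬ ColorAtMost c w` for a `c > B` of suitable parity gives an
uncolored idempotent extension `w₁` whose acceptance is opposite to that of `w`. A second such
flip `w₂` of `w₁` cannot extend back to the profile of `w₁` (that would make `w₁`, `w₂`
absorb each other and hence be accepted alike), so the set of profiles of extensions strictly
shrinks from `w` to `w₂`, and well-foundedness rules this out.
-/

namespace NaturalColor

section Words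
variable {A : Type}

theorem wcat_nil (w : ℕ → A) : wcat [] w = w := by
  funext n
  simp [wcat]

theorem wcat_cons_zero (a : A) (x : List A) (w : ℕ → A) : wcat (a :: x) w 0 = a := by
  simp [wcat]

theorem wcat_cons_succ (a : A) (x : List A) (w : ℕ → A) (n : ℕ) :
    wcat (a :: x) w (n + 1) = wcat x w n := by
  simp [wcat]

theorem wcat_append (x y : List A) (w : ℕ → A) :
    wcat (x ++ y) w = wcat x (wcat y w) := by
  induction x with
  | nil => rw [List.nil_append, wcat_nil]
  | cons a x ih =>
    funext n
    cases n with
    | zero => simp only [List.cons_append, wcat_cons_zero]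
    | succ n => simp only [List.cons_append, wcat_cons_succ, ih]

theorem wrep_succ (x : List A) (i : ℕ) : wrep x (i + 1) = x ++ wrep x i := by
  simp [wrep, List.replicate_succ]

theorem wrep_one (x : List A) : wrep x 1 = x := by
  simp [wrep]

theorem wrep_add (x : List A) (i j : ℕ) : wrep x (i + j) = wrep x i ++ wrep x j := by
  simp only [wrep, List.replicate_add, List.flatten_append]

theorem wrep_eq_nil_iff {x : List A} {i : ℕ} (hi : 0 < i) : wrep x i = [] ↔ x = [] := by
  obtain ⟨i, rfl⟩ := Nat.exists_eq_add_of_lt hi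
  rw [zero_add, wrep_succ, List.append_eq_nil_iff]
  constructor
  · exact And.left
  · rintro rfl
    simp [wrep]

theorem eq_of_wcat_eq {y : List A} (hy : y ≠ []) {w₁ w₂ : ℕ → A}
    (h₁ : wcat y w₁ = w₁) (h₂ : wcat y w₂ = w₂) : w₁ = w₂ := by
  have hlen : 0 < y.length := List.length_pos_iff.mpr hy
  funext n
  induction n using Nat.strong_induction_on with
  | _ n ih =>
    rw [← h₁, ← h₂]
    unfold wcat
    split_ifs
    · rfl
    · exact ih _ (by omega)

variable [Inhabited A]

theorem wcat_wpow {x : List A} (hx : x ≠ []) : wcat x (wpow x) = wpow x := by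
  have hlen : 0 < x.length := List.length_pos_iff.mpr hx
  funext n
  unfold wcat wpow
  split_ifs with h
  · rw [Nat.mod_eq_of_lt h, List.getD_eq_getElem _ _ h, List.get_eq_getElem]
  · rw [Nat.mod_eq_sub_mod (Nat.le_of_not_lt h)]

theorem wpow_wrep (x : List A) {i : ℕ} (hi : 0 < i) : wpow (wrep x i) = wpow x := by
  by_cases hx : x = []
  · rw [(wrep_eq_nil_iff hi).mpr hx, hx]
  have hwrep : ∀ j, wcat (wrep x j) (wpow x) = wpow x := by
    intro j
    induction j with
    | zero => exact wcat_nil _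
    | succ j ih => rw [wrep_succ, wcat_append, ih, wcat_wpow hx]
  have hi' : wrep x i ≠ [] := mt (wrep_eq_nil_iff hi).mp hx
  exact eq_of_wcat_eq hi' (wcat_wpow hi') (hwrep i)

theorem upw_wrep (u x : List A) {i : ℕ} (hi : 0 < i) : upw u (wrep x i) = upw u x := by
  rw [upw, upw, wpow_wrep x hi]

end Words

section Runs
variable {A Q : Type} (δ : Q → A → Q)

theorem runOf_succ_eq_tail (q : Q) (w : ℕ → A) (k : ℕ) :
    runOf δ q w (k + 1) = runOf δ (δ q (w 0)) (fun n => w (n + 1)) k := by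
  induction k with
  | zero => rfl
  | succ k ih => rw [runOf, ih, runOf]

theorem runOf_wcat (x : List A) (q : Q) (w : ℕ → A) (k : ℕ) :
    runOf δ q (wcat x w) (x.length + k) = runOf δ (x.foldl δ q) w k := by
  induction x generalizing q with
  | nil => rw [wcat_nil, List.length_nil, zero_add, List.foldl_nil]
  | cons a x ih =>
    rw [List.length_cons, Nat.add_right_comm, runOf_succ_eq_tail, wcat_cons_zero]
    simp only [wcat_cons_succ, ih, List.foldl_cons]

theorem runOf_wcat_of_le {x : List A} {j : ℕ} (hj : j ≤ x.length) (q : Q) (w : ℕ → A) :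
    runOf δ q (wcat x w) j = (x.take j).foldl δ q := by
  have h := runOf_wcat δ (x.take j) q (wcat (x.drop j) w) 0
  rwa [add_zero, List.length_take_of_le hj, ← wcat_append, List.take_append_drop] at h

theorem infSet_shift (r : ℕ → Q) (m : ℕ) : infSet (fun j => r (m + j)) = infSet r := by
  ext q
  constructor
  · intro h n
    obtain ⟨k, hnk, hk⟩ := h n
    exact ⟨m + k, by omega, hk⟩
  · intro h n
    obtain ⟨k, hnk, hk⟩ := h (m + n)
    refine ⟨k - m, by omega, ?_⟩
    show r (m + (k - m)) = q
    rwa [Nat.add_sub_cancel' (by omega)]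

theorem infSet_of_periodic {r : ℕ → Q} {n : ℕ} (hn : 0 < n) (h : ∀ j, r (n + j) = r j) :
    infSet r = r '' Set.Iic n := by
  have hper : ∀ k j, r (n * k + j) = r j := by
    intro k
    induction k with
    | zero => simp
    | succ k ih => intro j; rw [mul_add_one, add_right_comm, add_comm, h, ih]
  ext s
  constructor
  · rintro hs
    obtain ⟨m, -, rfl⟩ := hs 0
    refine ⟨m % n, (Nat.mod_lt m hn).le, ?_⟩
    rw [← hper (m / n), Nat.div_add_mod]
  · rintro ⟨j, -, rfl⟩ N
    exact ⟨n * N + j, by nlinarith, hper N j⟩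

def visited (q : Q) (x : List A) : Set Q := {s | s ∈ x.scanl δ q}

theorem mem_visited_iff {q s : Q} {x : List A} :
    s ∈ visited δ q x ↔ ∃ j ≤ x.length, (x.take j).foldl δ q = s := by
  simp only [visited, Set.mem_ofPred_eq, List.mem_iff_getElem, List.length_scanl,
    List.getElem_scanl, Nat.lt_succ_iff, exists_prop]

theorem visited_append (q : Q) (x y : List A) :
    visited δ q (x ++ y) = visited δ q x ∪ visited δ (x.foldl δ q) y := by
  have hlast : ∀ s, s = x.foldl δ q → s ∈ x.scanl δ q := by
    rintro s rfl
    exact (mem_visited_iff δ).mpr ⟨x.length, le_rfl, by rw [List.take_length]⟩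
  ext s
  cases y <;> simp only [visited, Set.mem_ofPred_eq, Set.mem_union, List.scanl_append,
    List.scanl_nil, List.scanl_cons, List.tail_cons, List.mem_append, List.mem_cons,
    List.not_mem_nil] <;> grind

theorem infSet_runOf_wpow [Inhabited A] {x : List A} (hx : x ≠ []) {q : Q}
    (hq : x.foldl δ q = q) : infSet (runOf δ q (wpow x)) = visited δ q x := by
  have hper : ∀ j, runOf δ q (wpow x) (x.length + j) = runOf δ q (wpow x) j := by
    intro j
    have h := runOf_wcat δ x q (wpow x) j
    rwa [wcat_wpow hx, hq] at h
  ext s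
  rw [infSet_of_periodic (List.length_pos_iff.mpr hx) hper, mem_visited_iff]
  refine exists_congr fun j => and_congr_right fun hj => ?_
  rw [← runOf_wcat_of_le δ hj q (wpow x), wcat_wpow hx]

end Runs

section Invariance
variable {A : Type} (L : Set (ℕ → A)) (u : List A)

theorem simL_trans {x y z : List A} (h₁ : simL L x y) (h₂ : simL L y z) : simL L x z :=
  fun w => (h₁ w).trans (h₂ w)

theorem simL_append_right {x y : List A} (h : simL L x y) (z : List A) :
    simL L (x ++ z) (y ++ z) := fun w => by
  rw [wcat_append, wcat_append]
  exact h _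

theorem uInv_append {x y : List A} (hx : UInv L u x) (hy : UInv L u y) : UInv L u (x ++ y) := by
  have h := simL_trans L hy (simL_append_right L hx y)
  rwa [List.append_assoc] at h

theorem uInv_wrep {x : List A} (hx : UInv L u x) (i : ℕ) : UInv L u (wrep x i) := by
  induction i with
  | zero => exact fun w => by rw [wrep, List.replicate_zero, List.flatten_nil, List.append_nil]
  | succ i ih => rw [wrep_succ]; exact uInv_append L u hx ih

end Invariance

section Profile
variable {A Q : Type} (δ : Q → A → Q)

/-- `wpow []` is a junk constant word, so the profile also records emptiness. -/
def profile (x : List A) : Bool × (Q → Q × Set Q) :=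
  (x.isEmpty, fun q => (x.foldl δ q, visited δ q x))

def extProfiles (w : List A) : Set (Bool × (Q → Q × Set Q)) :=
  Set.range fun r => profile δ (w ++ r)

variable {δ}

theorem foldl_eq_of_profile_eq {x y : List A} (h : profile δ x = profile δ y) (q : Q) :
    x.foldl δ q = y.foldl δ q :=
  congrArg Prod.fst (congrFun (congrArg Prod.snd h) q)

theorem visited_eq_of_profile_eq {x y : List A} (h : profile δ x = profile δ y) (q : Q) :
    visited δ q x = visited δ q y :=
  congrArg Prod.snd (congrFun (congrArg Prod.snd h) q)

theorem eq_nil_iff_of_profile_eq {x y : List A} (h : profile δ x = profile δ y) :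
    x = [] ↔ y = [] := by
  rw [← List.isEmpty_iff, ← List.isEmpty_iff]
  exact Bool.eq_iff_iff.mp (congrArg Prod.fst h)

theorem profile_append_congr {x x' y y' : List A} (hx : profile δ x = profile δ x')
    (hy : profile δ y = profile δ y') : profile δ (x ++ y) = profile δ (x' ++ y') := by
  have he : (x ++ y).isEmpty = (x' ++ y').isEmpty := by
    rw [Bool.eq_iff_iff]
    simp only [List.isEmpty_iff, List.append_eq_nil_iff, eq_nil_iff_of_profile_eq hx,
      eq_nil_iff_of_profile_eq hy]
  simp only [profile, he, List.foldl_append, visited_append,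
    foldl_eq_of_profile_eq hx, foldl_eq_of_profile_eq hy, visited_eq_of_profile_eq hx,
    visited_eq_of_profile_eq hy]

theorem profile_wrep_congr {x x' : List A} (h : profile δ x = profile δ x') (i : ℕ) :
    profile δ (wrep x i) = profile δ (wrep x' i) := by
  induction i with
  | zero => rfl
  | succ i ih => rw [wrep_succ, wrep_succ]; exact profile_append_congr h ih

theorem foldl_foldl_of_idempotent {x : List A} (h : profile δ (x ++ x) = profile δ x) (q : Q) :
    x.foldl δ (x.foldl δ q) = x.foldl δ q := by
  rw [← List.foldl_append]
  exact foldl_eq_of_profile_eq h q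

theorem profile_idempotent_of_absorb {a b : List A} (hab : profile δ (a ++ b) = profile δ b)
    (hba : profile δ (b ++ a) = profile δ a) : profile δ (a ++ a) = profile δ a :=
  calc profile δ (a ++ a) = profile δ (a ++ (b ++ a)) := profile_append_congr rfl hba.symm
    _ = profile δ ((a ++ b) ++ a) := by rw [List.append_assoc]
    _ = profile δ (b ++ a) := profile_append_congr hab rfl
    _ = profile δ a := hba

/-- `f i` stands for `x ^ i` in a finite semigroup: some positive power is idempotent. -/
theorem exists_pos_add_self_eq {β : Type*} [Finite β] (f : ℕ → β)
    (hf : ∀ a a' b, f a = f a' → f (a + b) = f (a' + b)) : ∃ m, 0 < m ∧ f (m + m) = f m := by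
  obtain ⟨k, l, hkl, hf_eq⟩ : ∃ k l, k < l ∧ f k = f l := by
    obtain ⟨k, l, hne, h⟩ := Finite.exists_ne_map_eq_of_infinite f
    rcases hne.lt_or_gt with hlt | hlt
    · exact ⟨k, l, hlt, h⟩
    · exact ⟨l, k, hlt, h.symm⟩
  have hper : ∀ n s, k ≤ s → f (s + n * (l - k)) = f s := by
    intro n
    induction n with
    | zero => simp
    | succ n ih =>
      intro s hs
      have h₁ : s + (n + 1) * (l - k) = l + (s + n * (l - k) - k) := by
        rw [add_one_mul]; omega
      have h₂ : s + n * (l - k) = k + (s + n * (l - k) - k) := by omega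
      rw [h₁, ← hf _ _ _ hf_eq, ← h₂, ih s hs]
  have hp : 0 < l - k := Nat.sub_pos_of_lt hkl
  exact ⟨(k + 1) * (l - k), Nat.mul_pos k.succ_pos hp, hper (k + 1) _ (by nlinarith)⟩

theorem exists_profile_wrep_idempotent [Finite Q] (x : List A) :
    ∃ m, 0 < m ∧ profile δ (wrep x m ++ wrep x m) = profile δ (wrep x m) := by
  obtain ⟨m, hm, h⟩ := exists_pos_add_self_eq (fun i => profile δ (wrep x i)) fun a a' b h => by
    simpa only [wrep_add] using profile_append_congr h rfl
  exact ⟨m, hm, by rwa [← wrep_add]⟩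

theorem profile_mem_extProfiles (w : List A) : profile δ w ∈ extProfiles δ w :=
  ⟨[], by simp only [List.append_nil]⟩

theorem extProfiles_append_subset (w r : List A) : extProfiles δ (w ++ r) ⊆ extProfiles δ w := by
  rintro _ ⟨r', rfl⟩
  exact ⟨r ++ r', by simp only [List.append_assoc]⟩

end Profile

section Muller
variable {A Q : Type} {δ : Q → A → Q} {q0 : Q} {α : Set (Set Q)} {L : Set (ℕ → A)}
  (hα : ∀ w, w ∈ L ↔ infSet (runOf δ q0 w) ∈ α)
include hα

theorem wcat_mem_iff (x : List A) (w : ℕ → A) :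
    wcat x w ∈ L ↔ infSet (runOf δ (x.foldl δ q0) w) ∈ α := by
  rw [hα, ← infSet_shift _ x.length]
  simp only [runOf_wcat]

theorem simL_of_foldl_eq {x y : List A} (h : x.foldl δ q0 = y.foldl δ q0) : simL L x y :=
  fun w => by rw [wcat_mem_iff hα, wcat_mem_iff hα, h]

variable [Inhabited A]

theorem upw_mem_iff_of_idempotent (u : List A) {x : List A} (hx : x ≠ [])
    (hidem : profile δ (x ++ x) = profile δ x) :
    upw u x ∈ L ↔ visited δ (x.foldl δ (u.foldl δ q0)) x ∈ α := by
  have hupw : upw u x = wcat (u ++ x) (wpow x) := by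
    rw [wcat_append, wcat_wpow hx, upw]
  rw [hupw, wcat_mem_iff hα, List.foldl_append,
    infSet_runOf_wpow δ hx (foldl_foldl_of_idempotent hidem _)]

theorem upw_mem_iff_of_profile_eq [Finite Q] (u : List A) {x x' : List A}
    (h : profile δ x = profile δ x') : upw u x ∈ L ↔ upw u x' ∈ L := by
  by_cases hx : x = []
  · rw [hx, ((eq_nil_iff_of_profile_eq h).mp hx)]
  have hx' : x' ≠ [] := mt (eq_nil_iff_of_profile_eq h).mpr hx
  obtain ⟨m, hm, hidem⟩ := exists_profile_wrep_idempotent (δ := δ) x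
  have hm_eq : profile δ (wrep x m) = profile δ (wrep x' m) := profile_wrep_congr h m
  have hidem' : profile δ (wrep x' m ++ wrep x' m) = profile δ (wrep x' m) := by
    rw [← hm_eq, ← profile_append_congr hm_eq hm_eq, hidem]
  rw [← upw_wrep u x hm, ← upw_wrep u x' hm,
    upw_mem_iff_of_idempotent hα u (mt (wrep_eq_nil_iff hm).mp hx) hidem,
    upw_mem_iff_of_idempotent hα u (mt (wrep_eq_nil_iff hm).mp hx') hidem',
    foldl_eq_of_profile_eq hm_eq, visited_eq_of_profile_eq hm_eq]

/-- `a b ≈ b` and `b a ≈ a` make `a`, `b` idempotent, and then `u a^ω` and `u b^ω` visit the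
same states infinitely often. -/
theorem upw_mem_iff_of_absorb (u : List A) {a b : List A} (ha : a ≠ []) (hb : b ≠ [])
    (hab : profile δ (a ++ b) = profile δ b) (hba : profile δ (b ++ a) = profile δ a) :
    upw u a ∈ L ↔ upw u b ∈ L := by
  rw [upw_mem_iff_of_idempotent hα u ha (profile_idempotent_of_absorb hab hba),
    upw_mem_iff_of_idempotent hα u hb (profile_idempotent_of_absorb hba hab)]
  set q := u.foldl δ q0
  have hbp : b.foldl δ (a.foldl δ q) = b.foldl δ q := by
    rw [← List.foldl_append]; exact foldl_eq_of_profile_eq hab q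
  have har : a.foldl δ (b.foldl δ q) = a.foldl δ q := by
    rw [← List.foldl_append]; exact foldl_eq_of_profile_eq hba q
  have hvis_a := visited_eq_of_profile_eq hba (a.foldl δ q)
  have hvis_b := visited_eq_of_profile_eq hab (b.foldl δ q)
  rw [visited_append, hbp] at hvis_a
  rw [visited_append, har] at hvis_b
  rw [← hvis_a, ← hvis_b, Set.union_comm]

theorem upw_mem_iff_of_mem_extProfiles (u : List A) {a r : List A} (ha : a ≠ [])
    (hidem_a : profile δ (a ++ a) = profile δ a)
    (hidem_b : profile δ ((a ++ r) ++ (a ++ r)) = profile δ (a ++ r))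
    (hmem : profile δ a ∈ extProfiles δ (a ++ r)) :
    upw u a ∈ L ↔ upw u (a ++ r) ∈ L := by
  obtain ⟨R, hR⟩ := hmem
  refine upw_mem_iff_of_absorb hα u ha (by simp [ha]) ?_ ?_
  · rw [← List.append_assoc]
    exact profile_append_congr hidem_a rfl
  · calc profile δ ((a ++ r) ++ a) = profile δ ((a ++ r) ++ ((a ++ r) ++ R)) :=
          profile_append_congr rfl hR.symm
      _ = profile δ (((a ++ r) ++ (a ++ r)) ++ R) := by simp only [List.append_assoc]
      _ = profile δ ((a ++ r) ++ R) := profile_append_congr hidem_b rfl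
      _ = profile δ a := hR

end Muller

section Colors
variable {A : Type} [Inhabited A] (L : Set (ℕ → A)) (u : List A)

theorem colorAtMost_append {c : ℕ} {v : List A} (h : ColorAtMost L u c v) (z : List A) :
    ColorAtMost L u c (v ++ z) := by
  rw [ColorAtMost] at h ⊢
  intro z' hz'
  rw [List.append_assoc] at hz' ⊢
  exact h (z ++ z') hz'

theorem colorAtMost_succ_of_forall {c : ℕ} {v : List A}
    (h : ∀ z, UInv L u (v ++ z) → ColorAtMost L u c (v ++ z)) : ColorAtMost L u (c + 1) v := by
  rw [ColorAtMost]
  intro z hz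
  refine Or.inr ⟨1, one_pos, ⟨c, c.lt_succ_self⟩, ?_⟩
  rw [wrep_one]
  exact h z hz

theorem colorAtMost_succ {c : ℕ} {v : List A} (h : ColorAtMost L u c v) :
    ColorAtMost L u (c + 1) v :=
  colorAtMost_succ_of_forall L u fun z _ => colorAtMost_append L u h z

theorem colorAtMost_mono {c d : ℕ} (hcd : c ≤ d) {v : List A} (h : ColorAtMost L u c v) :
    ColorAtMost L u d v := by
  induction d, hcd using Nat.le_induction with
  | base => exact h
  | succ d _ ih => exact colorAtMost_succ L u ih

theorem ncol_append_le {v : List A} (hv : ∃ c, ColorAtMost L u c v) (z : List A) :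
    ncol L u (v ++ z) ≤ ncol L u v := by
  unfold ncol
  split_ifs with hvz hv'
  · exact WithBot.coe_le_coe.mpr (Nat.sInf_le (colorAtMost_append L u (Nat.sInf_mem hv) z))
  · obtain ⟨z', hz'⟩ := hvz
    exact absurd ⟨z ++ z', by rwa [List.append_assoc] at hz'⟩ hv'
  all_goals exact bot_le

theorem exists_lt_even_iff (B : ℕ) (p : Prop) : ∃ c, B < c ∧ (Even c ↔ p) := by
  by_cases hp : p
  · exact ⟨2 * B + 2, by omega, iff_of_true ⟨B + 1, by ring⟩ hp⟩
  · exact ⟨2 * B + 1, by omega, iff_of_false (Nat.not_even_two_mul_add_one B) hp⟩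

variable {Q : Type} [Finite Q] (δ : Q → A → Q)

theorem exists_flip_extension {B : ℕ}
    (hB : ∀ x, (∃ c, ColorAtMost L u c x) → ColorAtMost L u B x)
    {w : List A} (hw : UInv L u w) (hwc : ∀ c, ¬ ColorAtMost L u c w) :
    ∃ r, UInv L u (w ++ r) ∧ (∀ c, ¬ ColorAtMost L u c (w ++ r)) ∧ w ++ r ≠ [] ∧
      profile δ ((w ++ r) ++ (w ++ r)) = profile δ (w ++ r) ∧
      (upw u (w ++ r) ∈ L ↔ upw u w ∉ L) := by
  obtain ⟨c, hBc, hc⟩ := exists_lt_even_iff B (upw u w ∈ L)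
  have hnc := hwc c
  rw [ColorAtMost] at hnc
  push Not at hnc
  obtain ⟨z, hz, hacc, hpow⟩ := hnc
  have hflip : upw u (w ++ z) ∈ L ↔ upw u w ∉ L := by
    rw [← hc]
    tauto
  have hne : w ++ z ≠ [] := by
    intro h
    obtain ⟨rfl, rfl⟩ := List.append_eq_nil_iff.mp h
    exact iff_not_self hflip
  obtain ⟨m, hm, hidem⟩ := exists_profile_wrep_idempotent (δ := δ) (w ++ z)
  obtain ⟨k, rfl⟩ := Nat.exists_eq_add_one_of_ne_zero hm.ne'
  refine ⟨z ++ wrep (w ++ z) k, ?_⟩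
  rw [← List.append_assoc, ← wrep_succ]
  exact ⟨uInv_wrep L u hz _, fun d hd => hpow _ hm ⟨B, hBc⟩ (hB _ ⟨d, hd⟩),
    mt (wrep_eq_nil_iff hm).mp hne, hidem, by rwa [upw_wrep u _ hm]⟩

end Colors

section MullerColors
variable {A Q : Type} [Inhabited A] [Finite Q] {δ : Q → A → Q} {q0 : Q} {α : Set (Set Q)}
  {L : Set (ℕ → A)} (hα : ∀ w, w ∈ L ↔ infSet (runOf δ q0 w) ∈ α) (u : List A)
include hα

theorem colorAtMost_of_profile_eq (c : ℕ) {v v' : List A} (h : profile δ v = profile δ v')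
    (hc : ColorAtMost L u c v) : ColorAtMost L u c v' := by
  induction c using Nat.strong_induction_on generalizing v v' with
  | _ c ih =>
  rw [ColorAtMost] at hc ⊢
  intro z hz
  have hvz : profile δ (v ++ z) = profile δ (v' ++ z) := profile_append_congr h rfl
  have hz' : UInv L u (v ++ z) := simL_trans L hz <| simL_of_foldl_eq hα <| by
    simp only [List.foldl_append, foldl_eq_of_profile_eq h]
  rcases hc z hz' with hacc | ⟨i, hi, c', hc'⟩
  · exact Or.inl ((upw_mem_iff_of_profile_eq hα u hvz).symm.trans hacc)
  · exact Or.inr ⟨i, hi, c', ih c' c'.isLt (profile_wrep_congr hvz i) hc'⟩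

theorem exists_colorAtMost_bound :
    ∃ B, ∀ x, (∃ c, ColorAtMost L u c x) → ColorAtMost L u B x := by
  obtain ⟨B, hB⟩ := Finite.exists_le fun t : Bool × (Q → Q × Set Q) =>
    sInf {c | ∃ x, profile δ x = t ∧ ColorAtMost L u c x}
  refine ⟨B, fun x ⟨c, hc⟩ => ?_⟩
  have hne : {c | ∃ x', profile δ x' = profile δ x ∧ ColorAtMost L u c x'}.Nonempty :=
    ⟨c, x, rfl, hc⟩
  obtain ⟨x', hx', hcx'⟩ := Nat.sInf_mem hne
  exact colorAtMost_mono L u (hB _) (colorAtMost_of_profile_eq hα u _ hx' hcx')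

theorem exists_colorAtMost_of_uInv {w : List A} (hw : UInv L u w) : ∃ c, ColorAtMost L u c w := by
  obtain ⟨B, hB⟩ := exists_colorAtMost_bound hα u
  suffices ∀ S w, extProfiles δ w = S → UInv L u w → ∃ c, ColorAtMost L u c w from
    this _ w rfl hw
  intro S
  induction S using WellFoundedLT.induction with
  | _ S ih =>
  rintro w rfl hw
  by_contra! hwc
  obtain ⟨r₁, hw₁, hc₁, hne₁, hid₁, -⟩ := exists_flip_extension L u δ hB hw hwc
  obtain ⟨r₂, hw₂, hc₂, -, hid₂, hacc₂⟩ := exists_flip_extension L u δ hB hw₁ hc₁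
  have hsub : extProfiles δ (w ++ r₁ ++ r₂) ⊂ extProfiles δ w := by
    refine ssubset_of_subset_not_superset ((extProfiles_append_subset _ r₂).trans
      (extProfiles_append_subset w r₁)) fun hsup => ?_
    have hmem := hsup (extProfiles_append_subset w r₁ (profile_mem_extProfiles (w ++ r₁)))
    have h := upw_mem_iff_of_mem_extProfiles hα u hne₁ hid₁ hid₂ hmem
    tauto
  obtain ⟨c, hc⟩ := ih _ hsub _ rfl hw₂
  exact hc₂ c hc

theorem exists_forall_colorAtMost : ∃ C, ∀ v, ColorAtMost L u C v := by
  obtain ⟨B, hB⟩ := exists_colorAtMost_bound hα u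
  exact ⟨B + 1, fun v => colorAtMost_succ_of_forall L u fun z hz =>
    hB _ (exists_colorAtMost_of_uInv hα u hz)⟩

end MullerColors

end NaturalColor

theorem OmegaRegular.exists_colorAtMost {A : Type} [Inhabited A] {L : Set (ℕ → A)}
    (hL : OmegaRegular L) (u : List A) : ∃ C, ∀ v, ColorAtMost L u C v := by
  obtain ⟨Q, _, q0, δ, α, hα⟩ := hL
  exact NaturalColor.exists_forall_colorAtMost hα u

theorem color_mono_nonincreasing_general {A : Type} [Inhabited A] (L : Set (ℕ → A))
    (hreg : OmegaRegular L) (u v : List A) (c : WithBot ℕ)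
    (hc : ncol L u v = c) :
    ∀ z : List A, ncol L u (v ++ z) ≤ c := by
  obtain ⟨C, hC⟩ := hreg.exists_colorAtMost u
  intro z
  rw [← hc]
  exact NaturalColor.ncol_append_le L u ⟨C, hC v⟩ z

/-- natural colors are monotonically non-increasing under extension. -/
theorem color_mono_nonincreasing {A : Type} [Inhabited A] (L : Set (ℕ → A))
    (hreg : OmegaRegular L) (u v : List A) (hv : v ≠ []) (c : WithBot ℕ)
    (hc : ncol L u v = c) :
    ∀ z : List A, ncol L u (v ++ z) ≤ c :=
  color_mono_nonincreasing_general L hreg u v c hc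
end
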